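/- Let n ≥ 2, and let {φ_0, …, φ_{n−1}} and {ψ_0, …, ψ_{n−1}} be two orthonormal bases of ℂⁿ. Let M be an n×n Hermitian matrix lying in the real span of the set {|φ_i⟩⟨φ_i| − I/n : 0 ≤ i ≤ n−1} ∪ {|ψ_j⟩⟨ψ_j| − I/n : 0 ≤ j ≤ n−1}, where I is the n×n identity matrix. Then for all i, j with ⟨ψ_j, φ_i⟩ ≠ 0, the weak value W_{φ_i,ψ_j}(M) = ⟨ψ_j, M φ_i⟩ / ⟨ψ_j, φ_i⟩ is a real number. -/

import Mathlib

noncomputable section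

/-- The rank-one projector `|v⟩⟨v|` with entries `v i * conj (v j)`. -/
def projN (n : ℕ) (v : EuclideanSpace ℂ (Fin n)) : Matrix (Fin n) (Fin n) ℂ :=
  Matrix.of fun i j => v i * star (v j)

/-- Matrix-vector multiplication, valued in `EuclideanSpace ℂ (Fin n)`. -/
def mulVecEN (n : ℕ) (M : Matrix (Fin n) (Fin n) ℂ) (v : EuclideanSpace ℂ (Fin n)) :
    EuclideanSpace ℂ (Fin n) :=
  (WithLp.equiv 2 (Fin n → ℂ)).symm (M.mulVec ((WithLp.equiv 2 (Fin n → ℂ)) v))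

/-- The weak value `W_{φ,ψ}(M) = ⟨ψ, Mφ⟩ / ⟨ψ, φ⟩`. -/
def weakN (n : ℕ) (φ ψ : EuclideanSpace ℂ (Fin n)) (M : Matrix (Fin n) (Fin n) ℂ) : ℂ :=
  (inner ℂ ψ (mulVecEN n M φ) : ℂ) / (inner ℂ ψ φ : ℂ)

/-!
For every generator, `⟨ψ, (|v⟩⟨v| - I/n) φ⟩ = ⟨ψ, v⟩⟨v, φ⟩ - ⟨ψ, φ⟩/n`, and when `φ = φᵢ`,
`ψ = ψⱼ` and `v` is some `φₖ` or `ψₖ`, orthonormality makes `⟨ψ, v⟩⟨v, φ⟩` either `0` or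
`⟨ψ, φ⟩`. So each generator sends `⟨ψⱼ, · φᵢ⟩` into `ℝ ⟨ψⱼ, φᵢ⟩`; since `A ↦ ⟨ψ, A φ⟩` is
real-linear, so does every real combination `M`, and the weak value is then a real number.
-/

open Matrix InnerProductSpace

local notation "⟪" x ", " y "⟫" => inner ℂ x y

lemma mulVecEN_eq_toEuclideanLin (n : ℕ) (A : Matrix (Fin n) (Fin n) ℂ) :
    mulVecEN n A = toEuclideanLin A := rfl

lemma projN_eq_symm_toEuclideanLin_rankOne (n : ℕ) (v : EuclideanSpace ℂ (Fin n)) :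
    projN n v = toEuclideanLin.symm (rankOne ℂ v v) := by
  rw [symm_toEuclideanLin_rankOne]; rfl

lemma mulVecEN_projN (n : ℕ) (v w : EuclideanSpace ℂ (Fin n)) :
    mulVecEN n (projN n v) w = ⟪v, w⟫ • v := by
  rw [mulVecEN_eq_toEuclideanLin, projN_eq_symm_toEuclideanLin_rankOne,
    LinearEquiv.apply_symm_apply]
  rfl

lemma mulVecEN_one (n : ℕ) (w : EuclideanSpace ℂ (Fin n)) : mulVecEN n 1 w = w := by
  simp [mulVecEN]

lemma inner_mulVecEN_projN_sub_smul_one (n : ℕ) (c : ℂ) (v ψ φ : EuclideanSpace ℂ (Fin n)) :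
    ⟪ψ, mulVecEN n (projN n v - c • 1) φ⟫ = ⟪ψ, v⟫ * ⟪v, φ⟫ - c * ⟪ψ, φ⟫ := by
  rw [mulVecEN_eq_toEuclideanLin, map_sub, map_smul, LinearMap.sub_apply, LinearMap.smul_apply,
    ← mulVecEN_eq_toEuclideanLin, ← mulVecEN_eq_toEuclideanLin, mulVecEN_projN, mulVecEN_one,
    inner_sub_right, inner_smul_right, inner_smul_right, mul_comm]

def innerMulVecENₗ (n : ℕ) (ψ φ : EuclideanSpace ℂ (Fin n)) :
    Matrix (Fin n) (Fin n) ℂ →ₗ[ℂ] ℂ :=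
  innerₛₗ ℂ ψ ∘ₗ LinearMap.applyₗ φ ∘ₗ toEuclideanLin.toLinearMap

lemma innerMulVecENₗ_apply (n : ℕ) (ψ φ : EuclideanSpace ℂ (Fin n))
    (A : Matrix (Fin n) (Fin n) ℂ) :
    innerMulVecENₗ n ψ φ A = ⟪ψ, mulVecEN n A φ⟫ := rfl

section Orthonormal

variable {ι E : Type*} [NormedAddCommGroup E] [InnerProductSpace ℂ E] {b : ι → E}

lemma Orthonormal.inner_mul_inner_mem_span_left (hb : Orthonormal ℂ b) (ψ : E) (k i : ι) :
    ⟪ψ, b k⟫ * ⟪b k, b i⟫ ∈ (ℝ ∙ ⟪ψ, b i⟫) := by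
  classical
  rw [orthonormal_iff_ite.mp hb]
  split_ifs with h
  · subst h; simp [Submodule.mem_span_singleton_self]
  · simp

lemma Orthonormal.inner_mul_inner_mem_span_right (hb : Orthonormal ℂ b) (φ : E) (j k : ι) :
    ⟪b j, b k⟫ * ⟪b k, φ⟫ ∈ (ℝ ∙ ⟪b j, φ⟫) := by
  classical
  rw [orthonormal_iff_ite.mp hb]
  split_ifs with h
  · subst h; simp [Submodule.mem_span_singleton_self]
  · simp

end Orthonormal

lemma ofReal_mul_mem_span_singleton (r : ℝ) (c : ℂ) : (r : ℂ) * c ∈ (ℝ ∙ c) :=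
  Submodule.mem_span_singleton.mpr ⟨r, Complex.real_smul⟩

lemma im_div_eq_zero_of_mem_span {z c : ℂ} (hz : z ∈ (ℝ ∙ c)) : (z / c).im = 0 := by
  obtain ⟨r, rfl⟩ := Submodule.mem_span_singleton.mp hz
  rcases eq_or_ne c 0 with hc | hc
  · simp [hc]
  · simp [Complex.real_smul, hc]

theorem stmt17_general (n : ℕ)
    (φv ψv : Fin n → EuclideanSpace ℂ (Fin n))
    (hφ : Orthonormal ℂ φv) (hψ : Orthonormal ℂ ψv)
    (M : Matrix (Fin n) (Fin n) ℂ)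
    (hspan : M ∈ Submodule.span ℝ
      ((Set.range fun i : Fin n =>
          projN n (φv i) - ((n : ℂ))⁻¹ • (1 : Matrix (Fin n) (Fin n) ℂ)) ∪
        (Set.range fun j : Fin n =>
          projN n (ψv j) - ((n : ℂ))⁻¹ • (1 : Matrix (Fin n) (Fin n) ℂ)))) :
    ∀ i j : Fin n, (inner ℂ (ψv j) (φv i) : ℂ) ≠ 0 →
      (weakN n (φv i) (ψv j) M).im = 0 := by
  intro i j _
  have hident : ((n : ℂ))⁻¹ * ⟪ψv j, φv i⟫ ∈ (ℝ ∙ ⟪ψv j, φv i⟫) := by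
    simpa using ofReal_mul_mem_span_singleton (n : ℝ)⁻¹ ⟪ψv j, φv i⟫
  have hM : M ∈ (ℝ ∙ ⟪ψv j, φv i⟫).comap
      ((innerMulVecENₗ n (ψv j) (φv i)).restrictScalars ℝ) := by
    refine Submodule.span_le.mpr ?_ hspan
    rintro _ (⟨k, rfl⟩ | ⟨k, rfl⟩) <;>
      simp only [SetLike.mem_coe, Submodule.mem_comap, LinearMap.restrictScalars_apply,
        innerMulVecENₗ_apply, inner_mulVecEN_projN_sub_smul_one]
    · exact Submodule.sub_mem _ (hφ.inner_mul_inner_mem_span_left _ k i) hident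
    · exact Submodule.sub_mem _ (hψ.inner_mul_inner_mem_span_right _ j k) hident
  exact im_div_eq_zero_of_mem_span hM

/-- if `M` is Hermitian and lies in the real span of the shifted projectors
`|φ_i⟩⟨φ_i| - I/n` and `|ψ_j⟩⟨ψ_j| - I/n` of two orthonormal bases, then every weak value
`W_{φ_i,ψ_j}(M)` (whenever `⟨ψ_j, φ_i⟩ ≠ 0`) is real. -/
theorem stmt17 (n : ℕ) (hn : 2 ≤ n)
    (φv ψv : Fin n → EuclideanSpace ℂ (Fin n))
    (hφ : Orthonormal ℂ φv) (hψ : Orthonormal ℂ ψv)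
    (M : Matrix (Fin n) (Fin n) ℂ) (hM : M.IsHermitian)
    (hspan : M ∈ Submodule.span ℝ
      ((Set.range fun i : Fin n =>
          projN n (φv i) - ((n : ℂ))⁻¹ • (1 : Matrix (Fin n) (Fin n) ℂ)) ∪
        (Set.range fun j : Fin n =>
          projN n (ψv j) - ((n : ℂ))⁻¹ • (1 : Matrix (Fin n) (Fin n) ℂ)))) :
    ∀ i j : Fin n, (inner ℂ (ψv j) (φv i) : ℂ) ≠ 0 →
      (weakN n (φv i) (ψv j) M).im = 0 :=
  stmt17_general n φv ψv hφ hψ M hspan
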